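/- Let w: S¹ × [0,∞) → ℝ be a smooth solution of the quasilinear equation ∂_t w = w_{xx}/(1 + w_x²) with |w_x| ≤ M uniformly. Then the mean value w̄ = (1/2π)∫_{S¹} w dx is constant in time, and ∫_{S¹}(w - w̄)² dx decays exponentially: d/dt (½∫(w-w̄)²) ≤ -C∫(w - w̄)² for a constant C > 0 depending only on M. -/

import Mathlib

open Real intervalIntegral Set


/-- Joint smoothness of a partial derivative of a smooth function. -/
lemma pderiv_contDiff {f : ℝ × ℝ → ℝ} (hf : ContDiff ℝ (⊤ : ℕ∞) f) :
    ContDiff ℝ (⊤ : ℕ∞) (fun p : ℝ × ℝ => deriv (fun y => f (y, p.2)) p.1) := by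
  have h : ContDiff ℝ (⊤ : ℕ∞) (fun p : ℝ × ℝ =>
      fderiv ℝ (fun y => f (y, p.2)) p.1 (1 : ℝ)) := by
    apply ContDiff.fderiv_apply (f := fun (p : ℝ × ℝ) (y : ℝ) => f (y, p.2))
      (g := fun p : ℝ × ℝ => p.1) (k := fun _ => (1 : ℝ))
    · exact hf.comp (contDiff_snd.prodMk (contDiff_snd.comp contDiff_fst))
    · exact contDiff_fst
    · exact contDiff_const
    · exact (by simp)
  simpa only [fderiv_apply_one_eq_deriv] using h

lemma bound_of_continuous {G : ℝ × ℝ → ℝ} (h : Continuous G) (t₀ : ℝ) :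
    ∃ B : ℝ, ∀ x ∈ Set.uIcc (0:ℝ) (2*π), ∀ s ∈ Metric.ball t₀ 1, |G (x, s)| ≤ B := by
  obtain ⟨B, hB⟩ := (IsCompact.exists_bound_of_continuousOn
    ((isCompact_uIcc (a := (0:ℝ)) (b := 2*π)).prod (isCompact_Icc (a := t₀ - 1) (b := t₀ + 1)))
    h.continuousOn)
  refine ⟨B, fun x hx s hs => ?_⟩
  have hs' : s ∈ Set.Icc (t₀ - 1) (t₀ + 1) := by
    rcases Metric.mem_ball.mp hs with h'
    rw [Real.dist_eq] at h'
    constructor <;> [linarith [abs_lt.mp h'] ; linarith [abs_lt.mp h']]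
  simpa [Real.norm_eq_abs] using hB (x, s) ⟨hx, hs'⟩

/-- Differentiation under the interval integral sign, continuous version. -/
lemma hasDerivAt_intervalIntegral_param
    {F F' : ℝ → ℝ → ℝ} (t₀ : ℝ)
    (hF : Continuous (fun p : ℝ × ℝ => F p.2 p.1))
    (hF' : Continuous (fun p : ℝ × ℝ => F' p.2 p.1))
    (hd : ∀ x s : ℝ, HasDerivAt (fun u => F u x) (F' s x) s) :
    HasDerivAt (fun s => ∫ x in (0:ℝ)..(2*π), F s x) (∫ x in (0:ℝ)..(2*π), F' t₀ x) t₀ := by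
  obtain ⟨B, hB⟩ := bound_of_continuous hF' t₀
  have hcF : ∀ s, Continuous fun x => F s x :=
    fun s => hF.comp (continuous_id.prodMk continuous_const)
  have hcF' : ∀ s, Continuous fun x => F' s x :=
    fun s => hF'.comp (continuous_id.prodMk continuous_const)
  refine (intervalIntegral.hasDerivAt_integral_of_dominated_loc_of_deriv_le
    (F := F) (F' := F') (x₀ := t₀) (a := 0) (b := 2*π) (bound := fun _ => B)
    (μ := MeasureTheory.volume) (Metric.ball_mem_nhds t₀ one_pos) ?_ ?_ ?_ ?_ ?_ ?_).2
  · exact Filter.Eventually.of_forall fun s => ((hcF s).aestronglyMeasurable)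
  · exact (hcF t₀).intervalIntegrable _ _
  · exact (hcF' t₀).aestronglyMeasurable
  · refine Filter.Eventually.of_forall fun x hx s hs => ?_
    simpa [Real.norm_eq_abs] using hB x (uIoc_subset_uIcc hx) s hs
  · exact intervalIntegrable_const
  · exact Filter.Eventually.of_forall fun x _ s _ => hd x s


lemma arctan_lower {M : ℝ} (hM : 0 < M) {y : ℝ} (hy : |y| ≤ M) :
    (1 / (1 + M ^ 2)) * y ^ 2 ≤ y * arctan y := by
  set δ : ℝ := 1 / (1 + M ^ 2) with hδ
  have hδpos : 0 < δ := by positivity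
  have hmono : MonotoneOn (fun z => arctan z - δ * z) (Icc (-M) M) := by
    apply monotoneOn_of_deriv_nonneg (convex_Icc _ _)
    · exact (Real.continuous_arctan.sub (continuous_const.mul continuous_id)).continuousOn
    · exact (Real.differentiable_arctan.sub
        ((differentiable_id.const_mul δ))).differentiableOn
    · intro z hz
      rw [interior_Icc, mem_Ioo] at hz
      have hd : HasDerivAt (fun z : ℝ => arctan z - δ * z) (1 / (1 + z ^ 2) - δ) z := by
        exact ((Real.hasDerivAt_arctan z).sub ((hasDerivAt_id z).const_mul δ)).congr_deriv (by simp)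
      rw [hd.deriv]
      have hz2 : z ^ 2 ≤ M ^ 2 := by nlinarith [hz.1, hz.2]
      have : δ ≤ 1 / (1 + z ^ 2) := by
        rw [hδ]
        apply one_div_le_one_div_of_le (by positivity) (by linarith)
      linarith
  have hyIcc : y ∈ Icc (-M) M := by
    rcases abs_le.mp hy with ⟨h1, h2⟩; exact ⟨h1, h2⟩
  have h0Icc : (0:ℝ) ∈ Icc (-M) M := ⟨by linarith, hM.le⟩
  rcases le_or_gt 0 y with h | h
  · have := hmono h0Icc hyIcc h
    simp only [Real.arctan_zero, mul_zero, sub_zero, zero_sub] at this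
    have h' : δ * y ≤ arctan y := by linarith
    calc δ * y ^ 2 = y * (δ * y) := by ring
    _ ≤ y * arctan y := mul_le_mul_of_nonneg_left h' h
  · have := hmono hyIcc h0Icc h.le
    simp only [Real.arctan_zero, mul_zero, sub_zero] at this
    have h' : arctan y ≤ δ * y := by linarith
    calc δ * y ^ 2 = y * (δ * y) := by ring
    _ ≤ y * arctan y := mul_le_mul_of_nonpos_left h' h.le


lemma poincare {g : ℝ → ℝ} (hg : ContDiff ℝ (⊤ : ℕ∞) g)
    (hmean : ∫ x in (0:ℝ)..(2*π), g x = 0) :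
    ∫ x in (0:ℝ)..(2*π), g x ^ 2 ≤ 512 * ∫ x in (0:ℝ)..(2*π), deriv g x ^ 2 := by
  have hπ : (0:ℝ) < 2*π := by positivity
  have hgc : Continuous g := hg.continuous
  have hg2 : ContDiff ℝ ((⊤ : ℕ∞) : WithTop ℕ∞) g := hg.of_le (by simp)
  have hg' : Continuous (deriv g) := (contDiff_infty_iff_deriv.mp hg2).2.continuous
  -- a zero of g in [0, 2π]
  have hex : ∃ x₀ ∈ Icc (0:ℝ) (2*π), g x₀ = 0 := by
    by_contra hc
    push_neg at hc
    have key : ∀ a ∈ Icc (0:ℝ) (2*π), ∀ b ∈ Icc (0:ℝ) (2*π), g a < 0 → 0 < g b → False := by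
      intro a ha b hb hga hgb
      have hsub : uIcc a b ⊆ Icc (0:ℝ) (2*π) := uIcc_subset_Icc ha hb
      have h0 : (0:ℝ) ∈ uIcc (g a) (g b) := by
        rw [Set.mem_uIcc]; exact Or.inl ⟨hga.le, hgb.le⟩
      obtain ⟨z, hz, hz0⟩ := intermediate_value_uIcc (hgc.continuousOn) h0
      exact hc z (hsub hz) hz0
    rcases lt_or_gt_of_ne (hc 0 ⟨le_refl 0, hπ.le⟩) with h0 | h0
    · have hneg : ∀ x ∈ Ioo (0:ℝ) (2*π), 0 < -g x := by
        intro x hx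
        rcases lt_or_gt_of_ne (hc x ⟨hx.1.le, hx.2.le⟩) with h | h
        · linarith
        · exact (key 0 ⟨le_refl 0, hπ.le⟩ x ⟨hx.1.le, hx.2.le⟩ h0 h).elim
      have hpos : 0 < ∫ x in (0:ℝ)..(2*π), (-g x) :=
        intervalIntegral_pos_of_pos_on ((hgc.neg).intervalIntegrable (μ := MeasureTheory.volume) _ _) hneg hπ
      rw [intervalIntegral.integral_neg, hmean] at hpos
      norm_num at hpos
    · have hposs : ∀ x ∈ Ioo (0:ℝ) (2*π), 0 < g x := by
        intro x hx
        rcases lt_or_gt_of_ne (hc x ⟨hx.1.le, hx.2.le⟩) with h | h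
        · exact (key x ⟨hx.1.le, hx.2.le⟩ 0 ⟨le_refl 0, hπ.le⟩ h h0).elim
        · exact h
      have hpos : 0 < ∫ x in (0:ℝ)..(2*π), g x :=
        intervalIntegral_pos_of_pos_on (hgc.intervalIntegrable (μ := MeasureTheory.volume) _ _) hposs hπ
      rw [hmean] at hpos
      exact lt_irrefl 0 hpos
  obtain ⟨x₀, hx₀, hgx₀⟩ := hex
  have habs : Continuous fun x => |2 * g x * deriv g x| := ((continuous_const.mul hgc).mul hg').abs
  set L := ∫ x in (0:ℝ)..(2*π), |2 * g x * deriv g x| with hLdef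
  have hptL : ∀ x ∈ Icc (0:ℝ) (2*π), g x ^ 2 ≤ L := by
    intro x hx
    have hftc : ∫ y in x₀..x, (2 * g y * deriv g y) = g x ^ 2 - g x₀ ^ 2 := by
      apply intervalIntegral.integral_eq_sub_of_hasDerivAt
      · intro y _
        have hd : HasDerivAt g (deriv g y) y := (hg.differentiable (by simp) y).hasDerivAt
        have := hd.pow 2
        norm_num at this
        exact this
      · exact ((continuous_const.mul hgc).mul hg').intervalIntegrable (μ := MeasureTheory.volume) _ _
    have h1 : g x ^ 2 = ∫ y in x₀..x, (2 * g y * deriv g y) := by rw [hftc, hgx₀]; ring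
    have h2 : |∫ y in x₀..x, (2 * g y * deriv g y)| ≤ abs (∫ y in x₀..x, |2 * g y * deriv g y|) := by
      simpa only [Real.norm_eq_abs] using intervalIntegral.norm_integral_le_abs_integral_norm
        (f := fun y => 2 * g y * deriv g y) (a := x₀) (b := x) (μ := MeasureTheory.volume)
    have hsub : Set.uIoc x₀ x ⊆ Set.uIoc (0:ℝ) (2*π) := by
      rw [Set.uIoc_of_le hπ.le]
      intro z hz
      rcases Set.mem_uIoc.mp hz with ⟨ha, hb⟩ | ⟨ha, hb⟩
      · exact ⟨lt_of_le_of_lt hx₀.1 ha, le_trans hb hx.2⟩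
      · exact ⟨lt_of_le_of_lt hx.1 ha, le_trans hb hx₀.2⟩
    have h3 : abs (∫ y in x₀..x, |2 * g y * deriv g y|) ≤ |L| := by
      exact intervalIntegral.abs_integral_mono_interval hsub
        (Filter.Eventually.of_forall fun y => abs_nonneg _)
        (habs.intervalIntegrable (μ := MeasureTheory.volume) _ _)
    have hL0 : 0 ≤ L := integral_nonneg hπ.le fun y _ => abs_nonneg _
    calc g x ^ 2 ≤ |∫ y in x₀..x, (2 * g y * deriv g y)| := h1 ▸ le_abs_self _
      _ ≤ abs (∫ y in x₀..x, |2 * g y * deriv g y|) := h2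
      _ ≤ |L| := h3
      _ = L := abs_of_nonneg hL0
  have hpt2 : ∀ x : ℝ, |2 * g x * deriv g x| ≤ (1/32) * g x ^ 2 + 32 * deriv g x ^ 2 := by
    intro x
    have h1 : |2 * g x * deriv g x| = 2 * |g x| * |deriv g x| := by
      rw [abs_mul, abs_mul]
      norm_num
    rw [h1]
    nlinarith [sq_nonneg (|g x| - 32 * |deriv g x|), sq_abs (g x), sq_abs (deriv g x),
      abs_nonneg (g x), abs_nonneg (deriv g x)]
  set I := ∫ x in (0:ℝ)..(2*π), g x ^ 2 with hIdef
  set J := ∫ x in (0:ℝ)..(2*π), deriv g x ^ 2 with hJdef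
  have hI0 : 0 ≤ I := integral_nonneg hπ.le fun x _ => sq_nonneg _
  have hJ0 : 0 ≤ J := integral_nonneg hπ.le fun x _ => sq_nonneg _
  have hgsq : Continuous fun x => g x ^ 2 := hgc.pow 2
  have hg'sq : Continuous fun x => deriv g x ^ 2 := hg'.pow 2
  have hLle : L ≤ (1/32) * I + 32 * J := by
    have h : L ≤ ∫ x in (0:ℝ)..(2*π), ((1/32) * g x ^ 2 + 32 * deriv g x ^ 2) := intervalIntegral.integral_mono_on hπ.le (habs.intervalIntegrable (μ := MeasureTheory.volume) _ _)
      (((continuous_const.mul hgsq).add (continuous_const.mul hg'sq)).intervalIntegrable (μ := MeasureTheory.volume) _ _)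
      (fun x _ => hpt2 x)
    rwa [intervalIntegral.integral_add (f := fun x => (1/32) * g x ^ 2) (g := fun x => 32 * deriv g x ^ 2) ((continuous_const.mul hgsq).intervalIntegrable (μ := MeasureTheory.volume) _ _)
      ((continuous_const.mul hg'sq).intervalIntegrable (μ := MeasureTheory.volume) _ _),
      intervalIntegral.integral_const_mul, intervalIntegral.integral_const_mul] at h
  have hItot : I ≤ (2*π) * ((1/32) * I + 32 * J) := by
    calc I ≤ ∫ _x in (0:ℝ)..(2*π), ((1/32) * I + 32 * J) :=
          intervalIntegral.integral_mono_on hπ.le (hgsq.intervalIntegrable (μ := MeasureTheory.volume) _ _)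
            intervalIntegrable_const (fun x hx => (hptL x hx).trans hLle)
      _ = (2*π) * ((1/32) * I + 32 * J) := by
          rw [intervalIntegral.integral_const, smul_eq_mul, sub_zero]
  have hR0 : 0 ≤ (1/32) * I + 32 * J := by linarith
  have h8 : I ≤ 8 * ((1/32) * I + 32 * J) := by
    refine le_trans hItot (mul_le_mul_of_nonneg_right ?_ hR0)
    linarith [Real.pi_le_four]
  linarith


/-- The spatial derivative of `w`. -/
noncomputable abbrev vX (w : ℝ → ℝ → ℝ) (x t : ℝ) : ℝ := deriv (fun y => w y t) x

/-- The right-hand side of the equation. -/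
noncomputable abbrev wT (w : ℝ → ℝ → ℝ) (x t : ℝ) : ℝ :=
  deriv (deriv fun y => w y t) x / (1 + (deriv (fun y => w y t) x) ^ 2)

section wlemmas

variable {w : ℝ → ℝ → ℝ}

lemma vX_contDiff (hsmooth : ContDiff ℝ (⊤ : ℕ∞) (Function.uncurry w)) :
    ContDiff ℝ (⊤ : ℕ∞) fun p : ℝ × ℝ => vX w p.1 p.2 := by
  have h := pderiv_contDiff hsmooth
  simpa only [Function.uncurry_apply_pair] using h

lemma vXx_contDiff (hsmooth : ContDiff ℝ (⊤ : ℕ∞) (Function.uncurry w)) :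
    ContDiff ℝ (⊤ : ℕ∞) fun p : ℝ × ℝ => deriv (deriv fun y => w y p.2) p.1 := by
  exact pderiv_contDiff (vX_contDiff hsmooth)

lemma wT_cont (hsmooth : ContDiff ℝ (⊤ : ℕ∞) (Function.uncurry w)) :
    Continuous fun p : ℝ × ℝ => wT w p.1 p.2 := by
  apply Continuous.div ((vXx_contDiff hsmooth).continuous)
    (continuous_const.add (((vX_contDiff hsmooth).continuous).pow 2))
  intro p
  have hp : (0:ℝ) < 1 + vX w p.1 p.2 ^ 2 := by positivity
  exact hp.ne'

lemma hasDerivAt_arctan_vX (hsmooth : ContDiff ℝ (⊤ : ℕ∞) (Function.uncurry w)) (x t : ℝ) :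
    HasDerivAt (fun y => arctan (vX w y t)) (wT w x t) x := by
  have hcd : ContDiff ℝ (⊤ : ℕ∞) fun y => vX w y t :=
    (vX_contDiff hsmooth).comp (contDiff_id.prodMk contDiff_const)
  have h1 : HasDerivAt (fun y => vX w y t) (deriv (deriv fun y => w y t) x) x :=
    (hcd.differentiable (by simp) x).hasDerivAt
  have h2 := (Real.hasDerivAt_arctan (vX w x t)).comp x h1
  refine h2.congr_deriv (Eq.symm ?_)
  show deriv (deriv fun y => w y t) x / (1 + (deriv (fun y => w y t) x) ^ 2) = _
  rw [one_div, inv_mul_eq_div]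

lemma vX_periodic (hper : ∀ x t, w (x + 2 * π) t = w x t) (x t : ℝ) :
    vX w (x + 2 * π) t = vX w x t := by
  show deriv (fun y => w y t) (x + 2 * π) = deriv (fun y => w y t) x
  rw [← deriv_comp_add_const]
  congr 1
  funext y
  exact hper y t

lemma integral_wT_zero (hsmooth : ContDiff ℝ (⊤ : ℕ∞) (Function.uncurry w))
    (hper : ∀ x t, w (x + 2 * π) t = w x t) (t : ℝ) :
    ∫ x in (0:ℝ)..(2 * π), wT w x t = 0 := by
  have hwTxc : Continuous fun x => wT w x t :=
    (wT_cont hsmooth).comp (continuous_id.prodMk continuous_const)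
  rw [intervalIntegral.integral_eq_sub_of_hasDerivAt
    (f := fun y => arctan (vX w y t)) (f' := fun x => wT w x t)
    (fun x _ => hasDerivAt_arctan_vX hsmooth x t)
    (hwTxc.intervalIntegrable (μ := MeasureTheory.volume) _ _)]
  have h := vX_periodic hper 0 t
  rw [zero_add] at h
  rw [h, sub_self]

end wlemmas

/-- The mean value of a `2π`-periodic function over the circle. -/
noncomputable def meanValue (w : ℝ → ℝ → ℝ) (t : ℝ) : ℝ :=
  (1 / (2 * π)) * ∫ x in (0 : ℝ)..(2 * π), w x t

/-- the `n = 1` case of Lemma 5.2: for a smooth `2π`-periodic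
solution of `∂_t w = w_xx / (1 + w_x²)` with `|w_x| ≤ M`, the mean value
`w̄` is constant in time and `d/dt (½∫ (w - w̄)²) ≤ -C ∫ (w - w̄)²` for some
`C > 0` depending only on `M`. -/
theorem stmt_16 (M : ℝ) (hM : 0 < M) (w : ℝ → ℝ → ℝ)
    (hper : ∀ x t, w (x + 2 * π) t = w x t)
    (hsmooth : ContDiff ℝ (⊤ : ℕ∞) (Function.uncurry w))
    (heq : ∀ x t, HasDerivAt (fun s => w x s)
      (deriv (deriv fun y => w y t) x / (1 + (deriv (fun y => w y t) x) ^ 2)) t)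
    (hgrad : ∀ x t, |deriv (fun y => w y t) x| ≤ M) :
    (∀ t₁ t₂ : ℝ, meanValue w t₁ = meanValue w t₂) ∧
      ∃ C > (0 : ℝ), ∀ t : ℝ, ∃ D : ℝ,
        HasDerivAt (fun s => (1 / 2) * ∫ x in (0 : ℝ)..(2 * π), (w x s - meanValue w s) ^ 2) D t ∧
          D ≤ -C * ∫ x in (0 : ℝ)..(2 * π), (w x t - meanValue w t) ^ 2 := by
  have hπ : (0:ℝ) < 2 * π := by positivity
  have h1M : (0:ℝ) < 1 + M ^ 2 := by positivity
  have hwcont : Continuous fun p : ℝ × ℝ => w p.1 p.2 := hsmooth.continuous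
  have hwTc : Continuous fun p : ℝ × ℝ => wT w p.1 p.2 := wT_cont hsmooth
  have heq' : ∀ x s : ℝ, HasDerivAt (fun u => w x u) (wT w x s) s := fun x s => heq x s
  -- Part 1 : mean value is constant
  have hm : ∀ t₀ : ℝ, HasDerivAt (fun s => ∫ x in (0:ℝ)..(2 * π), w x s) 0 t₀ := by
    intro t₀
    have h := hasDerivAt_intervalIntegral_param (F := fun s x => w x s)
      (F' := fun s x => wT w x s) t₀ hwcont hwTc heq'
    rwa [integral_wT_zero hsmooth hper t₀] at h
  have hconst : ∀ t₁ t₂ : ℝ, meanValue w t₁ = meanValue w t₂ := by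
    intro t₁ t₂
    have h := is_const_of_deriv_eq_zero (f := fun s => ∫ x in (0:ℝ)..(2 * π), w x s)
      (fun s => (hm s).differentiableAt) (fun s => (hm s).deriv) t₁ t₂
    unfold meanValue
    rw [h]
  refine ⟨hconst, 1 / (512 * (1 + M ^ 2)), by positivity, ?_⟩
  intro t
  set c := meanValue w t with hc
  have hwxc : Continuous fun x => w x t := hwcont.comp (continuous_id.prodMk continuous_const)
  have hvxc : Continuous fun x => vX w x t :=
    (vX_contDiff hsmooth).continuous.comp (continuous_id.prodMk continuous_const)
  have hwTxc : Continuous fun x => wT w x t := hwTc.comp (continuous_id.prodMk continuous_const)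
  -- derivative of the energy
  have hF : Continuous fun p : ℝ × ℝ => (w p.1 p.2 - c) ^ 2 :=
    (hwcont.sub continuous_const).pow 2
  have hF' : Continuous fun p : ℝ × ℝ => 2 * (w p.1 p.2 - c) * wT w p.1 p.2 :=
    (continuous_const.mul (hwcont.sub continuous_const)).mul hwTc
  have hd : ∀ x s : ℝ, HasDerivAt (fun u => (w x u - c) ^ 2) (2 * (w x s - c) * wT w x s) s := by
    intro x s
    have h := ((heq' x s).sub_const c).pow 2
    norm_num at h
    exact h
  have hG := hasDerivAt_intervalIntegral_param (F := fun s x => (w x s - c) ^ 2)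
    (F' := fun s x => 2 * (w x s - c) * wT w x s) t hF hF' hd
  have hhalf := HasDerivAt.const_mul (1/2 : ℝ) hG
  have hfe : (fun s => (1/2 : ℝ) * ∫ x in (0:ℝ)..(2 * π), (w x s - meanValue w s) ^ 2)
      = fun s => (1/2 : ℝ) * ∫ x in (0:ℝ)..(2 * π), (w x s - c) ^ 2 := by
    funext s
    rw [hc, hconst s t]
  refine ⟨(1/2 : ℝ) * ∫ x in (0:ℝ)..(2 * π), 2 * (w x t - c) * wT w x t, ?_, ?_⟩
  · rw [hfe]
    exact hhalf
  · -- integration by parts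
    have hA : ∀ x : ℝ, HasDerivAt (fun y => (w y t - c) * arctan (vX w y t))
        (vX w x t * arctan (vX w x t) + (w x t - c) * wT w x t) x := by
      intro x
      have h1 : HasDerivAt (fun y => w y t - c) (vX w x t) x := by
        have hcd : ContDiff ℝ (⊤ : ℕ∞) fun y => w y t :=
          hsmooth.comp (contDiff_id.prodMk contDiff_const)
        have h : HasDerivAt (fun y => w y t) (deriv (fun y => w y t) x) x :=
          (hcd.differentiable (by simp) x).hasDerivAt
        exact h.sub_const c
      exact h1.mul (hasDerivAt_arctan_vX hsmooth x t)
    have hint1 : IntervalIntegrable (fun x => vX w x t * arctan (vX w x t))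
        MeasureTheory.volume 0 (2 * π) :=
      (hvxc.mul (Real.continuous_arctan.comp hvxc)).intervalIntegrable _ _
    have hint2 : IntervalIntegrable (fun x => (w x t - c) * wT w x t)
        MeasureTheory.volume 0 (2 * π) :=
      ((hwxc.sub continuous_const).mul hwTxc).intervalIntegrable _ _
    have hibp : (∫ x in (0:ℝ)..(2 * π), (vX w x t * arctan (vX w x t)
        + (w x t - c) * wT w x t)) = 0 := by
      rw [intervalIntegral.integral_eq_sub_of_hasDerivAt (fun x _ => hA x)
        (hint1.add hint2)]
      have hw2 : w (2 * π) t = w 0 t := by have h := hper 0 t; rwa [zero_add] at h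
      have hv2 : vX w (2 * π) t = vX w 0 t := by
        have h := vX_periodic hper 0 t; rwa [zero_add] at h
      rw [hw2, hv2, sub_self]
    have hsplit : (∫ x in (0:ℝ)..(2 * π), (w x t - c) * wT w x t)
        = - ∫ x in (0:ℝ)..(2 * π), vX w x t * arctan (vX w x t) := by
      have h := intervalIntegral.integral_add hint1 hint2
      rw [hibp] at h
      linarith
    have hDval : (1/2 : ℝ) * (∫ x in (0:ℝ)..(2 * π), 2 * (w x t - c) * wT w x t)
        = ∫ x in (0:ℝ)..(2 * π), (w x t - c) * wT w x t := by
      have h : (fun x => 2 * (w x t - c) * wT w x t)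
          = fun x => 2 * ((w x t - c) * wT w x t) := by funext x; ring
      rw [h, intervalIntegral.integral_const_mul]
      ring
    -- lower bound for ∫ vx * arctan vx
    have hmono1 : (1 / (1 + M ^ 2)) * (∫ x in (0:ℝ)..(2 * π), vX w x t ^ 2)
        ≤ ∫ x in (0:ℝ)..(2 * π), vX w x t * arctan (vX w x t) := by
      rw [← intervalIntegral.integral_const_mul]
      apply intervalIntegral.integral_mono_on hπ.le
        ((continuous_const.mul (hvxc.pow 2)).intervalIntegrable _ _) hint1
      intro x _
      exact arctan_lower hM (hgrad x t)
    -- Poincaré inequality for g = w · t - c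
    have hg : ContDiff ℝ (⊤ : ℕ∞) fun x => w x t - c :=
      (hsmooth.comp (contDiff_id.prodMk contDiff_const)).sub contDiff_const
    have hmean0 : ∫ x in (0:ℝ)..(2 * π), (w x t - c) = 0 := by
      rw [intervalIntegral.integral_sub (hwxc.intervalIntegrable _ _) intervalIntegrable_const,
        intervalIntegral.integral_const, smul_eq_mul, sub_zero, hc]
      unfold meanValue
      field_simp
      ring
    have hpoin := poincare hg hmean0
    simp only [deriv_sub_const] at hpoin
    -- combine everything
    set P := ∫ x in (0:ℝ)..(2 * π), (w x t - c) ^ 2 with hP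
    set Q := ∫ x in (0:ℝ)..(2 * π), vX w x t ^ 2 with hQ
    set R := ∫ x in (0:ℝ)..(2 * π), vX w x t * arctan (vX w x t) with hR
    have hpoin' : P ≤ 512 * Q := hpoin
    have hQR : Q ≤ (1 + M ^ 2) * R := by
      have h2 : Q = (1 + M ^ 2) * ((1 / (1 + M ^ 2)) * Q) := by field_simp
      rw [h2]
      exact mul_le_mul_of_nonneg_left hmono1 h1M.le
    rw [hDval, hsplit]
    have hgoal : (1 / (512 * (1 + M ^ 2))) * P ≤ R := by
      rw [one_div, inv_mul_eq_div, div_le_iff₀ (by positivity)]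
      nlinarith
    linarith
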